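/- Let u : ℝⁿ → ℝ be continuous and bounded below, let ε > 0, and let x ∈ ℝⁿ be a point at which u_ε is differentiable. Suppose y ∈ ℝⁿ attains the infimum defining u_ε(x), i.e. u_ε(x) = u(y) + |x−y|²/(2ε), and suppose u is differentiable at y. Then ∇u_ε(x) = ∇u(y). -/

import Mathlib

open Set

noncomputable section

/-- The infimal convolution `u_ε(x) = inf_y ( u(y) + |x−y|²/(2ε) )`. -/
def infConv {n : ℕ} (u : EuclideanSpace ℝ (Fin n) → ℝ) (ε : ℝ)
    (x : EuclideanSpace ℝ (Fin n)) : ℝ :=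
  ⨅ y : EuclideanSpace ℝ (Fin n), (u y + ‖x - y‖ ^ 2 / (2 * ε))

/-! If `u_ε(x)` is attained at `y`, then using `y + h` as a competitor for `u_ε(x + h)` gives
`u_ε(x + h) - u_ε(x) ≤ u(y + h) - u(y)` for all `h`. So `h ↦ u_ε(x + h) - u(y + h)` has a maximum
at `0`, and its derivative `Du_ε(x) - Du(y)` vanishes there. -/

theorem fderiv_eq_of_forall_sub_le {E : Type*} [NormedAddCommGroup E] [NormedSpace ℝ E]
    {f g : E → ℝ} {x y : E} (hf : DifferentiableAt ℝ f x) (hg : DifferentiableAt ℝ g y)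
    (hle : ∀ h, f (x + h) - f x ≤ g (y + h) - g y) :
    fderiv ℝ f x = fderiv ℝ g y := by
  have hmax : IsLocalMax (fun h ↦ f (x + h) - g (y + h)) 0 :=
    Filter.Eventually.of_forall fun h ↦ by simp only [add_zero]; linarith [hle h]
  have hderiv : HasFDerivAt (fun h ↦ f (x + h) - g (y + h)) (fderiv ℝ f x - fderiv ℝ g y) 0 :=
    ((hasFDerivAt_comp_add_left x).2 (by simpa using hf.hasFDerivAt)).sub
      ((hasFDerivAt_comp_add_left y).2 (by simpa using hg.hasFDerivAt))
  exact sub_eq_zero.mp (hmax.hasFDerivAt_eq_zero hderiv)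

theorem infConv_le {n : ℕ} {u : EuclideanSpace ℝ (Fin n) → ℝ} (hbdd : BddBelow (range u))
    {ε : ℝ} (hε : 0 ≤ ε) (x y : EuclideanSpace ℝ (Fin n)) :
    infConv u ε x ≤ u y + ‖x - y‖ ^ 2 / (2 * ε) := by
  obtain ⟨c, hc⟩ := hbdd
  refine ciInf_le ⟨c, ?_⟩ y
  rintro _ ⟨z, rfl⟩
  have : 0 ≤ ‖x - z‖ ^ 2 / (2 * ε) := by positivity
  linarith [hc ⟨z, rfl⟩]

theorem infConv_add_sub_le {n : ℕ} {u : EuclideanSpace ℝ (Fin n) → ℝ} (hbdd : BddBelow (range u))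
    {ε : ℝ} (hε : 0 ≤ ε) {x y : EuclideanSpace ℝ (Fin n)}
    (hy : infConv u ε x = u y + ‖x - y‖ ^ 2 / (2 * ε)) (h : EuclideanSpace ℝ (Fin n)) :
    infConv u ε (x + h) - infConv u ε x ≤ u (y + h) - u y := by
  have := infConv_le hbdd hε (x + h) (y + h)
  rw [add_sub_add_right_eq_sub] at this
  linarith

theorem statement8_general {n : ℕ} (u : EuclideanSpace ℝ (Fin n) → ℝ)
    (hbdd : BddBelow (Set.range u))
    (ε : ℝ) (hε : 0 < ε) (x : EuclideanSpace ℝ (Fin n))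
    (hdiff : DifferentiableAt ℝ (infConv u ε) x)
    (y : EuclideanSpace ℝ (Fin n))
    (hy : infConv u ε x = u y + ‖x - y‖ ^ 2 / (2 * ε))
    (hu : DifferentiableAt ℝ u y) :
    gradient (infConv u ε) x = gradient u y :=
  congrArg _ (fderiv_eq_of_forall_sub_le hdiff hu (infConv_add_sub_le hbdd hε.le hy))

/-- If `u_ε` is differentiable at `x`, the infimum defining `u_ε(x)` is attained at `y`,
and `u` is differentiable at `y`, then `∇u_ε(x) = ∇u(y)`. -/
theorem statement8 {n : ℕ} (u : EuclideanSpace ℝ (Fin n) → ℝ)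
    (hcont : Continuous u) (hbdd : BddBelow (Set.range u))
    (ε : ℝ) (hε : 0 < ε) (x : EuclideanSpace ℝ (Fin n))
    (hdiff : DifferentiableAt ℝ (infConv u ε) x)
    (y : EuclideanSpace ℝ (Fin n))
    (hy : infConv u ε x = u y + ‖x - y‖ ^ 2 / (2 * ε))
    (hu : DifferentiableAt ℝ u y) :
    gradient (infConv u ε) x = gradient u y :=
  statement8_general u hbdd ε hε x hdiff y hy hu
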